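/- Let (α₁, α₂, φ, g) be a metric contact pair with decomposable φ whose curvature vanishes on the vertical subbundle (R_{XY}Z_i = 0 for i = 1,2 and all X, Y), and let ĥ = (1/2)ℒ_{Z₁+Z₂}φ. Then ĥ² = -φ², every nonzero eigenvalue of ĥ is ±1, and rank ĥ = rank φ = 2h+2k. -/

import Mathlib

/-- An abstract algebraic model of a manifold endowed with a contact pair structure
`(α₁, α₂, φ)` with Reeb vector fields `Z₁, Z₂`, a Riemannian metric `g` and its
Levi-Civita connection `nabla`.  Here `F` plays the role of the ring of smooth
functions, `V` of the module of vector fields, `D X f` of the derivative of the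
function `f` along `X`, and `bracket` of the Lie bracket of vector fields. -/
structure ContactPairData (F V : Type*) [Field F] [LinearOrder F] [IsStrictOrderedRing F] [AddCommGroup V] [Module F V] where
  D : V → F → F
  bracket : V → V → V
  g : V → V → F
  nabla : V → V → V
  α₁ : V → F
  α₂ : V → F
  dα₁ : V → V → F
  dα₂ : V → V → F
  Z₁ : V
  Z₂ : V
  φ : V → V
  -- vector fields act on functions as derivations
  D_add : ∀ X f₁ f₂, D X (f₁ + f₂) = D X f₁ + D X f₂
  D_mul : ∀ X f₁ f₂, D X (f₁ * f₂) = f₁ * D X f₂ + D X f₁ * f₂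
  D_add_left : ∀ X Y f, D (X + Y) f = D X f + D Y f
  D_smul_left : ∀ (a : F) (X : V) f, D (a • X) f = a * D X f
  D_bracket : ∀ X Y f, D (bracket X Y) f = D X (D Y f) - D Y (D X f)
  bracket_antisymm : ∀ X Y, bracket X Y = - bracket Y X
  -- the Riemannian metric
  g_symm : ∀ X Y, g X Y = g Y X
  g_add_left : ∀ X Y W, g (X + Y) W = g X W + g Y W
  g_smul_left : ∀ (a : F) (X W : V), g (a • X) W = a * g X W
  g_pos : ∀ X, X ≠ 0 → 0 < g X X
  -- the one-forms of the pair
  α₁_add : ∀ X Y, α₁ (X + Y) = α₁ X + α₁ Y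
  α₁_smul : ∀ (a : F) (X : V), α₁ (a • X) = a * α₁ X
  α₂_add : ∀ X Y, α₂ (X + Y) = α₂ X + α₂ Y
  α₂_smul : ∀ (a : F) (X : V), α₂ (a • X) = a * α₂ X
  -- their exterior derivatives
  dα₁_eq : ∀ X Y, dα₁ X Y = (1/2 : F) * (D X (α₁ Y) - D Y (α₁ X) - α₁ (bracket X Y))
  dα₂_eq : ∀ X Y, dα₂ X Y = (1/2 : F) * (D X (α₂ Y) - D Y (α₂ X) - α₂ (bracket X Y))
  -- the endomorphism field φ of the contact pair structure
  φ_add : ∀ X Y, φ (X + Y) = φ X + φ Y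
  φ_smul : ∀ (a : F) (X : V), φ (a • X) = a • φ X
  φ_sq : ∀ X, φ (φ X) = -X + α₁ X • Z₁ + α₂ X • Z₂
  φ_Z₁ : φ Z₁ = 0
  φ_Z₂ : φ Z₂ = 0
  -- Z₁, Z₂ are the Reeb vector fields of the pair
  α₁_Z₁ : α₁ Z₁ = 1
  α₂_Z₂ : α₂ Z₂ = 1
  α₁_Z₂ : α₁ Z₂ = 0
  α₂_Z₁ : α₂ Z₁ = 0
  dα₁_Z₁ : ∀ X, dα₁ Z₁ X = 0
  dα₁_Z₂ : ∀ X, dα₁ Z₂ X = 0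
  dα₂_Z₁ : ∀ X, dα₂ Z₁ X = 0
  dα₂_Z₂ : ∀ X, dα₂ Z₂ X = 0
  -- nabla is the Levi-Civita connection of g
  nabla_add_left : ∀ X Y W, nabla (X + Y) W = nabla X W + nabla Y W
  nabla_smul_left : ∀ (a : F) (X W : V), nabla (a • X) W = a • nabla X W
  nabla_add_right : ∀ X Y W, nabla X (Y + W) = nabla X Y + nabla X W
  nabla_leibniz : ∀ (X : V) (a : F) (Y : V), nabla X (a • Y) = D X a • Y + a • nabla X Y
  nabla_compat : ∀ X Y W, D X (g Y W) = g (nabla X Y) W + g Y (nabla X W)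
  nabla_torsion_free : ∀ X Y, nabla X Y - nabla Y X = bracket X Y

namespace ContactPairData

variable {F V : Type*} [Field F] [LinearOrder F] [IsStrictOrderedRing F] [AddCommGroup V] [Module F V]
variable (P : ContactPairData F V)

/-- `g` is a metric compatible with the contact pair structure. -/
def Compatible : Prop :=
  ∀ X Y, P.g (P.φ X) (P.φ Y) = P.g X Y - P.α₁ X * P.α₁ Y - P.α₂ X * P.α₂ Y

/-- `g` is a metric associated to the contact pair structure, i.e. the data is a
metric contact pair. -/
def Associated : Prop :=
  (∀ X Y, P.g X (P.φ Y) = P.dα₁ X Y + P.dα₂ X Y) ∧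
  (∀ X, P.g X P.Z₁ = P.α₁ X) ∧ (∀ X, P.g X P.Z₂ = P.α₂ X)

/-- `φ` is decomposable: it preserves the tangent bundles
`T𝓕ᵢ = ker αᵢ ∩ ker dαᵢ` of the two characteristic foliations. -/
def Decomposable : Prop :=
  (∀ X, P.α₁ X = 0 → (∀ Y, P.dα₁ X Y = 0) →
    P.α₁ (P.φ X) = 0 ∧ ∀ Y, P.dα₁ (P.φ X) Y = 0) ∧
  (∀ X, P.α₂ X = 0 → (∀ Y, P.dα₂ X Y = 0) →
    P.α₂ (P.φ X) = 0 ∧ ∀ Y, P.dα₂ (P.φ X) Y = 0)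

/-- `Z = Z₁ + Z₂`, the sum of the two Reeb vector fields. -/
def Z : V := P.Z₁ + P.Z₂

/-- The Lie derivative `(ℒ_W φ) X`. -/
def lieφ (W X : V) : V := P.bracket W (P.φ X) - P.φ (P.bracket W X)

/-- The tensor `ĥ = (1/2) ℒ_Z φ`. -/
def hh (X : V) : V := (1/2 : F) • P.lieφ P.Z X

/-- The Riemann curvature `R_{X Y} W = ∇_X ∇_Y W - ∇_Y ∇_X W - ∇_{[X,Y]} W`. -/
def R (X Y W : V) : V :=
  P.nabla X (P.nabla Y W) - P.nabla Y (P.nabla X W) - P.nabla (P.bracket X Y) W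

/-- `Z = Z₁ + Z₂` is a Killing vector field. -/
def Killing : Prop := ∀ X Y, P.g (P.nabla X P.Z) Y + P.g (P.nabla Y P.Z) X = 0

/-- A vector field is horizontal when it lies in `ker α₁ ∩ ker α₂`. -/
def Horizontal (X : V) : Prop := P.α₁ X = 0 ∧ P.α₂ X = 0

end ContactPairData

/-!
`X ↦ ∇_X Z` splits into the symmetric operator `S` and the skew part `-φ`, the latter coming
from `g(·, φ·) = dα₁ + dα₂`. Since `Z` is geodesic, `R(X, Z)Z = 0` says `∇_Z(∇Z) = -(∇Z)²`;
its symmetric and skew parts give `∇_Z S = -S² - φ²` and `∇_Z φ = -(Sφ + φS)`, the second of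
which already yields `ĥ = -Sφ`. Applied to `Z₂` it gives `[Z₁, Z₂] = 0`, whence `S Z₁ = S Z₂ = 0`
and `∇_Z Z₁ = ∇_Z Z₂ = 0`. Then `∇_Z` commutes with `φ² = -I + α₁ ⊗ Z₁ + α₂ ⊗ Z₂`, which forces
`φSφ = S`, `φS = -Sφ` and `∇_Z φ = 0`. Conjugating `∇_Z S = -S² - φ²` by `φ` changes its sign,
so `S² = -φ²`, and finally `ĥ² = SφSφ = S² = -φ²`.
-/

namespace ContactPairData

variable {F V : Type*} [Field F] [LinearOrder F] [IsStrictOrderedRing F] [AddCommGroup V] [Module F V]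
variable (P : ContactPairData F V)

section Linearity

def φₗ : V →ₗ[F] V where
  toFun := P.φ
  map_add' := P.φ_add
  map_smul' := P.φ_smul

def gₗ (W : V) : V →ₗ[F] F where
  toFun X := P.g X W
  map_add' X Y := P.g_add_left X Y W
  map_smul' a X := P.g_smul_left a X W

def nablaₗ (W : V) : V →ₗ[F] V where
  toFun X := P.nabla X W
  map_add' X Y := P.nabla_add_left X Y W
  map_smul' a X := P.nabla_smul_left a X W

def nablaRight (X : V) : V →+ V := AddMonoidHom.mk' (P.nabla X) (P.nabla_add_right X)

def Dₗ (X : V) : F →+ F := AddMonoidHom.mk' (P.D X) (P.D_add X)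

@[simp] lemma φ_zero : P.φ 0 = 0 := P.φₗ.map_zero

@[simp] lemma φ_neg (X : V) : P.φ (-X) = -P.φ X := P.φₗ.map_neg X

lemma φ_sub (X Y : V) : P.φ (X - Y) = P.φ X - P.φ Y := P.φₗ.map_sub X Y

lemma g_sub_left (X Y W : V) : P.g (X - Y) W = P.g X W - P.g Y W := (P.gₗ W).map_sub X Y

lemma g_add_right (X Y W : V) : P.g X (Y + W) = P.g X Y + P.g X W := by
  rw [P.g_symm, P.g_add_left, P.g_symm Y, P.g_symm W]

lemma g_sub_right (X Y W : V) : P.g X (Y - W) = P.g X Y - P.g X W := by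
  rw [P.g_symm, g_sub_left, P.g_symm Y, P.g_symm W]

@[simp] lemma g_zero_left (W : V) : P.g 0 W = 0 := (P.gₗ W).map_zero

@[simp] lemma g_zero_right (X : V) : P.g X 0 = 0 := by
  rw [P.g_symm, g_zero_left]

lemma nabla_sub_left (X Y W : V) : P.nabla (X - Y) W = P.nabla X W - P.nabla Y W :=
  (P.nablaₗ W).map_sub X Y

@[simp] lemma nabla_zero_right (X : V) : P.nabla X 0 = 0 := (P.nablaRight X).map_zero

lemma nabla_neg_right (X Y : V) : P.nabla X (-Y) = -P.nabla X Y := (P.nablaRight X).map_neg Y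

lemma nabla_sub_right (X Y W : V) : P.nabla X (Y - W) = P.nabla X Y - P.nabla X W :=
  (P.nablaRight X).map_sub Y W

lemma D_zero (X : V) : P.D X 0 = 0 := (P.Dₗ X).map_zero

lemma D_neg (X : V) (f : F) : P.D X (-f) = -P.D X f := (P.Dₗ X).map_neg f

lemma D_one (X : V) : P.D X 1 = 0 := by
  have h := P.D_mul X 1 1
  simp only [mul_one, one_mul] at h
  linear_combination -h

lemma D_two (X : V) : P.D X 2 = 0 := by
  rw [← one_add_one_eq_two, P.D_add, D_one, add_zero]

lemma eq_zero_of_forall_g_eq_zero {X : V} (h : ∀ W, P.g X W = 0) : X = 0 := by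
  by_contra hX
  exact (P.g_pos X hX).ne' (h X)

lemma eq_of_φ_eq_zero {X : V} (h : P.φ X = 0) : X = P.α₁ X • P.Z₁ + P.α₂ X • P.Z₂ := by
  have h2 := P.φ_sq X
  rw [h, φ_zero] at h2
  linear_combination (norm := module) h2

lemma φ_eq_zero_iff (X : V) : P.φ X = 0 ↔ ∃ a b : F, X = a • P.Z₁ + b • P.Z₂ := by
  refine ⟨fun h => ⟨_, _, P.eq_of_φ_eq_zero h⟩, ?_⟩
  rintro ⟨a, b, rfl⟩
  rw [P.φ_add, P.φ_smul, P.φ_smul, P.φ_Z₁, P.φ_Z₂, smul_zero, smul_zero, add_zero]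

end Linearity

section Operators

def covDeriv (W : V) (T : V → V) (X : V) : V := P.nabla W (T X) - T (P.nabla W X)

def IsSymm (T : V → V) : Prop := ∀ X Y, P.g (T X) Y = P.g X (T Y)

def IsSkew (T : V → V) : Prop := ∀ X Y, P.g (T X) Y = -P.g X (T Y)

variable {P}

lemma IsSymm.add {T T' : V → V} (hT : P.IsSymm T) (hT' : P.IsSymm T') : P.IsSymm (T + T') :=
  fun X Y => by simp only [Pi.add_apply, P.g_add_left, g_add_right, hT X Y, hT' X Y]

lemma IsSkew.add {T T' : V → V} (hT : P.IsSkew T) (hT' : P.IsSkew T') : P.IsSkew (T + T') :=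
  fun X Y => by simp only [Pi.add_apply, P.g_add_left, g_add_right, hT X Y, hT' X Y]; ring

lemma IsSymm.comp_self {T : V → V} (hT : P.IsSymm T) : P.IsSymm (T ∘ T) :=
  fun _ _ => (hT _ _).trans (hT _ _)

lemma IsSkew.comp_self {T : V → V} (hT : P.IsSkew T) : P.IsSymm (T ∘ T) :=
  fun X Y => by simp only [Function.comp_apply]; rw [hT, hT, neg_neg]

lemma IsSymm.anticomm_isSkew {S K : V → V} (hS : P.IsSymm S) (hK : P.IsSkew K) :
    P.IsSkew (S ∘ K + K ∘ S) :=
  fun X Y => by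
    simp only [Pi.add_apply, Function.comp_apply, P.g_add_left, g_add_right]
    rw [hS (K X), hK X, hK (S X), hS X]
    ring

lemma IsSymm.covDeriv {T : V → V} (hT : P.IsSymm T) (W : V) : P.IsSymm (P.covDeriv W T) := by
  intro X Y
  have h₁ := P.nabla_compat W (T X) Y
  have h₂ := P.nabla_compat W X (T Y)
  rw [hT] at h₁
  simp only [ContactPairData.covDeriv, g_sub_left, g_sub_right]
  rw [hT (P.nabla W X), ← hT X (P.nabla W Y)]
  linear_combination h₂ - h₁

lemma IsSkew.covDeriv {T : V → V} (hT : P.IsSkew T) (W : V) : P.IsSkew (P.covDeriv W T) := by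
  intro X Y
  have h₁ := P.nabla_compat W (T X) Y
  have h₂ := P.nabla_compat W X (T Y)
  rw [hT, D_neg] at h₁
  simp only [ContactPairData.covDeriv, g_sub_left, g_sub_right]
  rw [hT (P.nabla W X)]
  linear_combination -h₁ - h₂ - hT X (P.nabla W Y)

lemma covDeriv_φ_conj {W : V} (hW : ∀ X, P.covDeriv W P.φ X = 0) (T : V → V) (X : V) :
    P.covDeriv W (fun Y => P.φ (T (P.φ Y))) X = P.φ (P.covDeriv W T (P.φ X)) := by
  have hc : ∀ Y, P.nabla W (P.φ Y) = P.φ (P.nabla W Y) := fun Y => sub_eq_zero.mp (hW Y)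
  simp only [covDeriv, φ_sub, hc]

lemma IsSymm.eq_zero_of_eq_isSkew {U K : V → V} (hU : P.IsSymm U) (hK : P.IsSkew K)
    (h : ∀ X, U X = K X) (X : V) : U X = 0 :=
  P.eq_zero_of_forall_g_eq_zero fun W => by
    have := hK X W
    rw [← h, ← h, ← hU] at this
    linear_combination this / 2

end Operators

section LeviCivita

lemma g_nabla_sub_g_nabla (ξ X Y : V) :
    P.g Y (P.nabla X ξ) - P.g X (P.nabla Y ξ) =
      P.D X (P.g Y ξ) - P.D Y (P.g X ξ) - P.g (P.bracket X Y) ξ := by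
  rw [P.nabla_compat, P.nabla_compat, ← P.nabla_torsion_free, g_sub_left]
  ring

lemma nabla_self_eq_zero {ξ : V} (hconst : ∀ Y, P.D Y (P.g ξ ξ) = 0)
    (hclosed : ∀ Y, P.g Y (P.nabla ξ ξ) = P.g ξ (P.nabla Y ξ)) : P.nabla ξ ξ = 0 :=
  P.eq_zero_of_forall_g_eq_zero fun Y => by
    have h := P.nabla_compat Y ξ ξ
    rw [hconst, P.g_symm (P.nabla Y ξ)] at h
    rw [P.g_symm, hclosed]
    linear_combination -h / 2

lemma covDeriv_nabla_self {ξ : V} (hξ : P.nabla ξ ξ = 0) (hR : ∀ X, P.R X ξ ξ = 0) (X : V) :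
    P.covDeriv ξ (P.nabla · ξ) X = -P.nabla (P.nabla X ξ) ξ := by
  have h := hR X
  rw [ContactPairData.R, hξ, nabla_zero_right, ← P.nabla_torsion_free, nabla_sub_left] at h
  rw [covDeriv]
  linear_combination (norm := module) -h

lemma R_add_right (X Y W₁ W₂ : V) : P.R X Y (W₁ + W₂) = P.R X Y W₁ + P.R X Y W₂ := by
  simp only [ContactPairData.R, P.nabla_add_right]
  abel

end LeviCivita

section MetricContactPair

variable {P}

lemma two_dα₁ (ha : P.Associated) (X Y : V) :
    P.g Y (P.nabla X P.Z₁) - P.g X (P.nabla Y P.Z₁) = 2 * P.dα₁ X Y := by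
  simp only [g_nabla_sub_g_nabla, ha.2.1, P.dα₁_eq]
  ring

lemma two_dα₂ (ha : P.Associated) (X Y : V) :
    P.g Y (P.nabla X P.Z₂) - P.g X (P.nabla Y P.Z₂) = 2 * P.dα₂ X Y := by
  simp only [g_nabla_sub_g_nabla, ha.2.2, P.dα₂_eq]
  ring

lemma isSkew_φ (ha : P.Associated) : P.IsSkew P.φ := fun X Y => by
  rw [P.g_symm, ha.1, ha.1]
  linear_combination -(two_dα₁ ha X Y + two_dα₁ ha Y X + two_dα₂ ha X Y + two_dα₂ ha Y X) / 2

lemma α₁_φ (ha : P.Associated) (X : V) : P.α₁ (P.φ X) = 0 := by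
  rw [← ha.2.1, isSkew_φ ha, P.φ_Z₁, g_zero_right, neg_zero]

lemma α₂_φ (ha : P.Associated) (X : V) : P.α₂ (P.φ X) = 0 := by
  rw [← ha.2.2, isSkew_φ ha, P.φ_Z₂, g_zero_right, neg_zero]

lemma φ_φ_φ_φ (ha : P.Associated) (X : V) : P.φ (P.φ (P.φ (P.φ X))) = -P.φ (P.φ X) := by
  rw [P.φ_sq (P.φ (P.φ X)), α₁_φ ha, α₂_φ ha, zero_smul, zero_smul, add_zero, add_zero]

lemma φ_Z : P.φ P.Z = 0 := by
  rw [ContactPairData.Z, P.φ_add, P.φ_Z₁, P.φ_Z₂, add_zero]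

lemma g_nabla_Z_sub (ha : P.Associated) (X Y : V) :
    P.g Y (P.nabla X P.Z) - P.g X (P.nabla Y P.Z) = 2 * P.g X (P.φ Y) := by
  rw [ContactPairData.Z, P.nabla_add_right, P.nabla_add_right, g_add_right, g_add_right, ha.1]
  linear_combination two_dα₁ ha X Y + two_dα₂ ha X Y

lemma nabla_Z_Z (ha : P.Associated) : P.nabla P.Z P.Z = 0 := by
  have hZZ : P.g P.Z P.Z = 2 := by
    rw [show P.g P.Z P.Z = P.g P.Z P.Z₁ + P.g P.Z P.Z₂ from g_add_right _ _ _ _, ha.2.1, ha.2.2,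
      ContactPairData.Z, P.α₁_add, P.α₂_add, P.α₁_Z₁, P.α₁_Z₂, P.α₂_Z₁, P.α₂_Z₂]
    norm_num
  refine P.nabla_self_eq_zero (fun Y => by rw [hZZ, D_two]) fun Y => ?_
  have hφ : P.g P.Z (P.φ Y) = 0 := by rw [← neg_eq_zero, ← isSkew_φ ha, φ_Z, g_zero_left]
  linear_combination g_nabla_Z_sub ha P.Z Y + 2 * hφ

lemma nabla_Z₁_Z₁ (ha : P.Associated) : P.nabla P.Z₁ P.Z₁ = 0 := by
  refine P.nabla_self_eq_zero (fun Y => by rw [ha.2.1, P.α₁_Z₁, D_one]) fun Y => ?_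
  linear_combination two_dα₁ ha P.Z₁ Y + 2 * P.dα₁_Z₁ Y

lemma nabla_Z₂_Z₂ (ha : P.Associated) : P.nabla P.Z₂ P.Z₂ = 0 := by
  refine P.nabla_self_eq_zero (fun Y => by rw [ha.2.2, P.α₂_Z₂, D_one]) fun Y => ?_
  linear_combination two_dα₂ ha P.Z₂ Y + 2 * P.dα₂_Z₂ Y

lemma covDeriv_φ_anticomm_φ (ha : P.Associated) {W : V} (h₁ : P.nabla W P.Z₁ = 0)
    (h₂ : P.nabla W P.Z₂ = 0) (X : V) :
    P.covDeriv W P.φ (P.φ X) + P.φ (P.covDeriv W P.φ X) = 0 := by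
  have hα₁ : P.D W (P.α₁ X) = P.α₁ (P.nabla W X) := by
    rw [← ha.2.1, ← ha.2.1, P.nabla_compat, h₁, g_zero_right, add_zero]
  have hα₂ : P.D W (P.α₂ X) = P.α₂ (P.nabla W X) := by
    rw [← ha.2.2, ← ha.2.2, P.nabla_compat, h₂, g_zero_right, add_zero]
  simp only [covDeriv, φ_sub, P.φ_sq, P.nabla_add_right, nabla_neg_right, P.nabla_leibniz, h₁, h₂,
    hα₁, hα₂, smul_zero, add_zero]
  abel

variable (P) in
/-- The symmetric part of `X ↦ ∇_X Z`, whose skew part is `-φ`. -/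
def S : V →ₗ[F] V := P.nablaₗ P.Z + P.φₗ

lemma S_apply (X : V) : P.S X = P.nabla X P.Z + P.φ X := rfl

lemma nabla_Z_eq (X : V) : P.nabla X P.Z = P.S X - P.φ X := by
  rw [S_apply, add_sub_cancel_right]

lemma isSymm_S (ha : P.Associated) : P.IsSymm P.S := fun X Y => by
  rw [S_apply, S_apply, P.g_add_left, g_add_right, P.g_symm _ Y]
  linear_combination g_nabla_Z_sub ha X Y + isSkew_φ ha X Y

lemma S_Z (ha : P.Associated) : P.S P.Z = 0 := by
  rw [S_apply, nabla_Z_Z ha, φ_Z, add_zero]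

end MetricContactPair

section FlatAlongZ

variable {P}

/-- `R(·, Z)Z = 0` rewritten through `∇Z = S - φ`: symmetric operators on the left, skew ones
on the right. -/
lemma covDeriv_S_add_eq (ha : P.Associated) (hR : ∀ X, P.R X P.Z P.Z = 0) (X : V) :
    P.covDeriv P.Z P.S X + P.S (P.S X) + P.φ (P.φ X) =
      P.covDeriv P.Z P.φ X + (P.S (P.φ X) + P.φ (P.S X)) := by
  have h := P.covDeriv_nabla_self (nabla_Z_Z ha) hR X
  simp only [covDeriv, nabla_Z_eq, map_sub, φ_sub, nabla_sub_right] at h ⊢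
  linear_combination (norm := module) h

lemma covDeriv_S_add_eq_zero (ha : P.Associated) (hR : ∀ X, P.R X P.Z P.Z = 0) (X : V) :
    P.covDeriv P.Z P.S X + P.S (P.S X) + P.φ (P.φ X) = 0 :=
  IsSymm.eq_zero_of_eq_isSkew
    ((((isSymm_S ha).covDeriv P.Z).add (isSymm_S ha).comp_self).add (isSkew_φ ha).comp_self)
    (((isSkew_φ ha).covDeriv P.Z).add ((isSymm_S ha).anticomm_isSkew (isSkew_φ ha)))
    (covDeriv_S_add_eq ha hR) X

lemma covDeriv_Z_S (ha : P.Associated) (hR : ∀ X, P.R X P.Z P.Z = 0) (X : V) :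
    P.covDeriv P.Z P.S X = -P.S (P.S X) - P.φ (P.φ X) := by
  linear_combination (norm := module) covDeriv_S_add_eq_zero ha hR X

lemma covDeriv_Z_φ (ha : P.Associated) (hR : ∀ X, P.R X P.Z P.Z = 0) (X : V) :
    P.covDeriv P.Z P.φ X = -(P.S (P.φ X) + P.φ (P.S X)) := by
  linear_combination (norm := module) covDeriv_S_add_eq_zero ha hR X - covDeriv_S_add_eq ha hR X

lemma hh_eq (ha : P.Associated) (hR : ∀ X, P.R X P.Z P.Z = 0) (X : V) :
    P.hh X = -P.S (P.φ X) := by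
  have h := covDeriv_Z_φ ha hR X
  rw [covDeriv] at h
  rw [hh, lieφ, ← P.nabla_torsion_free, ← P.nabla_torsion_free, nabla_Z_eq, nabla_Z_eq, φ_sub,
    φ_sub]
  linear_combination (norm := module) (1 / 2 : F) • h

lemma bracket_Z₁_Z₂ (ha : P.Associated) (hR : ∀ X, P.R X P.Z P.Z = 0) :
    P.bracket P.Z₁ P.Z₂ = 0 := by
  have hsplit : P.bracket P.Z₁ P.Z₂ = P.nabla P.Z P.Z₂ - P.S P.Z₂ := by
    rw [S_apply, ← P.nabla_torsion_free, ContactPairData.Z, P.nabla_add_left, P.nabla_add_right,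
      P.φ_Z₂]
    abel
  have hφ : P.φ (P.bracket P.Z₁ P.Z₂) = 0 := by
    have h := covDeriv_Z_φ ha hR P.Z₂
    simp only [covDeriv, P.φ_Z₂, nabla_zero_right, map_zero, zero_add, zero_sub, neg_inj] at h
    rw [hsplit, φ_sub, h, sub_self]
  have hα₁ : P.α₁ (P.bracket P.Z₁ P.Z₂) = 0 := by
    have h := P.dα₁_eq P.Z₁ P.Z₂
    rw [P.dα₁_Z₁, P.α₁_Z₂, P.α₁_Z₁, D_zero, D_one] at h
    linear_combination 2 * h
  have hα₂ : P.α₂ (P.bracket P.Z₁ P.Z₂) = 0 := by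
    have h := P.dα₂_eq P.Z₁ P.Z₂
    rw [P.dα₂_Z₁, P.α₂_Z₂, P.α₂_Z₁, D_zero, D_one] at h
    linear_combination 2 * h
  rw [P.eq_of_φ_eq_zero hφ, hα₁, hα₂, zero_smul, zero_smul, add_zero]

lemma S_Z₁_eq_S_Z₂ (ha : P.Associated) (hR : ∀ X, P.R X P.Z P.Z = 0) : P.S P.Z₁ = P.S P.Z₂ := by
  have h := P.nabla_torsion_free P.Z₁ P.Z₂
  rw [bracket_Z₁_Z₂ ha hR, sub_eq_zero] at h
  rw [S_apply, S_apply, ContactPairData.Z, P.nabla_add_right, P.nabla_add_right, nabla_Z₁_Z₁ ha,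
    nabla_Z₂_Z₂ ha, P.φ_Z₁, P.φ_Z₂, h, zero_add, add_zero, add_zero]

lemma S_Z₁ (ha : P.Associated) (hR : ∀ X, P.R X P.Z P.Z = 0) : P.S P.Z₁ = 0 := by
  have h := S_Z ha
  rw [ContactPairData.Z, map_add, ← S_Z₁_eq_S_Z₂ ha hR, ← two_smul F] at h
  exact (smul_eq_zero.mp h).resolve_left two_ne_zero

lemma S_Z₂ (ha : P.Associated) (hR : ∀ X, P.R X P.Z P.Z = 0) : P.S P.Z₂ = 0 :=
  S_Z₁_eq_S_Z₂ ha hR ▸ S_Z₁ ha hR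

lemma nabla_Z_Z₁ (ha : P.Associated) (hR : ∀ X, P.R X P.Z P.Z = 0) : P.nabla P.Z P.Z₁ = 0 := by
  have h := S_Z₂ ha hR
  rw [S_apply, ContactPairData.Z, P.nabla_add_right, nabla_Z₂_Z₂ ha, P.φ_Z₂, add_zero,
    add_zero] at h
  rw [ContactPairData.Z, P.nabla_add_left, nabla_Z₁_Z₁ ha, h, add_zero]

lemma nabla_Z_Z₂ (ha : P.Associated) (hR : ∀ X, P.R X P.Z P.Z = 0) : P.nabla P.Z P.Z₂ = 0 := by
  have h := S_Z₁ ha hR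
  rw [S_apply, ContactPairData.Z, P.nabla_add_right, nabla_Z₁_Z₁ ha, P.φ_Z₁, zero_add,
    add_zero] at h
  rw [ContactPairData.Z, P.nabla_add_left, nabla_Z₂_Z₂ ha, h, add_zero]

lemma α₁_S (ha : P.Associated) (hR : ∀ X, P.R X P.Z P.Z = 0) (X : V) : P.α₁ (P.S X) = 0 := by
  rw [← ha.2.1, isSymm_S ha, S_Z₁ ha hR, g_zero_right]

lemma α₂_S (ha : P.Associated) (hR : ∀ X, P.R X P.Z P.Z = 0) (X : V) : P.α₂ (P.S X) = 0 := by
  rw [← ha.2.2, isSymm_S ha, S_Z₂ ha hR, g_zero_right]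

lemma S_φ_φ (ha : P.Associated) (hR : ∀ X, P.R X P.Z P.Z = 0) (X : V) :
    P.S (P.φ (P.φ X)) = -P.S X := by
  rw [P.φ_sq, map_add, map_add, map_neg, map_smul, map_smul, S_Z₁ ha hR, S_Z₂ ha hR, smul_zero,
    smul_zero, add_zero, add_zero]

lemma φ_φ_S (ha : P.Associated) (hR : ∀ X, P.R X P.Z P.Z = 0) (X : V) :
    P.φ (P.φ (P.S X)) = -P.S X := by
  rw [P.φ_sq, α₁_S ha hR, α₂_S ha hR, zero_smul, zero_smul, add_zero, add_zero]

lemma φ_S_φ (ha : P.Associated) (hR : ∀ X, P.R X P.Z P.Z = 0) (X : V) :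
    P.φ (P.S (P.φ X)) = P.S X := by
  have h := covDeriv_φ_anticomm_φ ha (nabla_Z_Z₁ ha hR) (nabla_Z_Z₂ ha hR) X
  rw [covDeriv_Z_φ ha hR, covDeriv_Z_φ ha hR, S_φ_φ ha hR] at h
  simp only [φ_neg, P.φ_add, φ_φ_S ha hR] at h
  linear_combination (norm := module) (-(1 / 2) : F) • h

lemma φ_S (ha : P.Associated) (hR : ∀ X, P.R X P.Z P.Z = 0) (X : V) :
    P.φ (P.S X) = -P.S (P.φ X) := by
  rw [← φ_S_φ ha hR X, φ_φ_S ha hR]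

lemma covDeriv_Z_φ_eq_zero (ha : P.Associated) (hR : ∀ X, P.R X P.Z P.Z = 0) (X : V) :
    P.covDeriv P.Z P.φ X = 0 := by
  rw [covDeriv_Z_φ ha hR, φ_S ha hR, add_neg_cancel, neg_zero]

lemma S_S (ha : P.Associated) (hR : ∀ X, P.R X P.Z P.Z = 0) (X : V) :
    P.S (P.S X) = -P.φ (P.φ X) := by
  have h : P.covDeriv P.Z P.S X = P.φ (P.covDeriv P.Z P.S (P.φ X)) := by
    conv_lhs => rw [← funext (φ_S_φ ha hR)]
    exact P.covDeriv_φ_conj (covDeriv_Z_φ_eq_zero ha hR) P.S X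
  rw [covDeriv_Z_S ha hR, covDeriv_Z_S ha hR, φ_sub, φ_neg, φ_S ha hR, φ_S_φ ha hR,
    φ_φ_φ_φ ha] at h
  linear_combination (norm := module) (-(1 / 2) : F) • h

lemma hh_hh (ha : P.Associated) (hR : ∀ X, P.R X P.Z P.Z = 0) (X : V) :
    P.hh (P.hh X) = -P.φ (P.φ X) := by
  rw [hh_eq ha hR, hh_eq ha hR, φ_neg, map_neg, neg_neg, φ_S_φ ha hR, S_S ha hR]

lemma hh_smul (ha : P.Associated) (hR : ∀ X, P.R X P.Z P.Z = 0) (c : F) (X : V) :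
    P.hh (c • X) = c • P.hh X := by
  rw [hh_eq ha hR, hh_eq ha hR, P.φ_smul, map_smul, smul_neg]

lemma α₁_hh (ha : P.Associated) (hR : ∀ X, P.R X P.Z P.Z = 0) (X : V) : P.α₁ (P.hh X) = 0 := by
  rw [hh_eq ha hR, ← map_neg, α₁_S ha hR]

lemma α₂_hh (ha : P.Associated) (hR : ∀ X, P.R X P.Z P.Z = 0) (X : V) : P.α₂ (P.hh X) = 0 := by
  rw [hh_eq ha hR, ← map_neg, α₂_S ha hR]

lemma eq_one_or_eq_neg_one_of_hh_eq_smul (ha : P.Associated) (hR : ∀ X, P.R X P.Z P.Z = 0)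
    {c : F} {v : V} (hv : v ≠ 0) (hcv : P.hh v = c • v) (hc : c ≠ 0) : c = 1 ∨ c = -1 := by
  have hα₁ : P.α₁ v = 0 := by
    have h := α₁_hh ha hR v
    rw [hcv, P.α₁_smul] at h
    exact (mul_eq_zero.mp h).resolve_left hc
  have hα₂ : P.α₂ v = 0 := by
    have h := α₂_hh ha hR v
    rw [hcv, P.α₂_smul] at h
    exact (mul_eq_zero.mp h).resolve_left hc
  have hsq : (c * c) • v = v := by
    rw [mul_smul, ← hcv, ← hh_smul ha hR, ← hcv, hh_hh ha hR, P.φ_sq, hα₁, hα₂, zero_smul,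
      zero_smul, add_zero, add_zero, neg_neg]
  have h : (c * c - 1) • v = 0 := by rw [sub_smul, one_smul, hsq, sub_self]
  exact mul_self_eq_one_iff.mp (sub_eq_zero.mp ((smul_eq_zero.mp h).resolve_right hv))

lemma hh_eq_zero_iff (ha : P.Associated) (hR : ∀ X, P.R X P.Z P.Z = 0) (X : V) :
    P.hh X = 0 ↔ P.φ X = 0 := by
  refine ⟨fun h => ?_, fun h => by rw [hh_eq ha hR, h, map_zero, neg_zero]⟩
  have hφφ : P.φ (P.φ X) = 0 := by
    rw [← neg_eq_zero, ← hh_hh ha hR, h, hh_eq ha hR, φ_zero, map_zero, neg_zero]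
  rw [P.eq_of_φ_eq_zero hφφ, α₁_φ ha, α₂_φ ha, zero_smul, zero_smul, add_zero]

end FlatAlongZ

end ContactPairData

theorem statement_18_general {F V : Type*} [Field F] [LinearOrder F] [IsStrictOrderedRing F] [AddCommGroup V] [Module F V]
    (P : ContactPairData F V) (ha : P.Associated)
    (hcurv : ∀ X Y, P.R X Y P.Z₁ = 0 ∧ P.R X Y P.Z₂ = 0) :
    (∀ X, P.hh (P.hh X) = -(P.φ (P.φ X))) ∧
    (∀ (c : F) (v : V), v ≠ 0 → P.hh v = c • v → c ≠ 0 → c = 1 ∨ c = -1) ∧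
    (∀ X, P.hh X = 0 ↔ P.φ X = 0) ∧
    (∀ X, P.φ X = 0 ↔ ∃ a b : F, X = a • P.Z₁ + b • P.Z₂) := by
  have hR : ∀ X, P.R X P.Z P.Z = 0 := fun X => by
    rw [show P.R X P.Z P.Z = P.R X P.Z (P.Z₁ + P.Z₂) from rfl, P.R_add_right, (hcurv X P.Z).1,
      (hcurv X P.Z).2, add_zero]
  exact ⟨P.hh_hh ha hR, fun c v hv hcv hc => P.eq_one_or_eq_neg_one_of_hh_eq_smul ha hR hv hcv hc,
    P.hh_eq_zero_iff ha hR, P.φ_eq_zero_iff⟩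

/-- For a metric contact pair of type `(h, k)` with decomposable `φ` on a
`(2h+2k+2)`-dimensional manifold (encoded by an orthonormal frame) whose curvature
vanishes on the vertical subbundle, the tensor `ĥ = (1/2)ℒ_{Z₁+Z₂}φ` satisfies
`ĥ² = -φ²`, every nonzero eigenvalue of `ĥ` is `±1`, and
`rank ĥ = rank φ = 2h + 2k` (expressed through `ker ĥ = ker φ = ℝZ₁ ⊕ ℝZ₂`,
the frame fixing the dimension `2h + 2k + 2`). -/
theorem statement_18 {F V : Type*} [Field F] [LinearOrder F] [IsStrictOrderedRing F] [AddCommGroup V] [Module F V]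
    (P : ContactPairData F V) (ha : P.Associated) (hd : P.Decomposable)
    (h k : ℕ) (e : Fin (2 * h + 2 * k) → V)
    (he_on : ∀ i j, P.g (e i) (e j) = if i = j then 1 else 0)
    (he_Z : ∀ i, P.g (e i) P.Z₁ = 0 ∧ P.g (e i) P.Z₂ = 0)
    (hexp : ∀ X : V, X = P.g X P.Z₁ • P.Z₁ + P.g X P.Z₂ • P.Z₂ +
      ∑ i, P.g X (e i) • e i)
    (hcurv : ∀ X Y, P.R X Y P.Z₁ = 0 ∧ P.R X Y P.Z₂ = 0) :
    (∀ X, P.hh (P.hh X) = -(P.φ (P.φ X))) ∧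
    (∀ (c : F) (v : V), v ≠ 0 → P.hh v = c • v → c ≠ 0 → c = 1 ∨ c = -1) ∧
    (∀ X, P.hh X = 0 ↔ P.φ X = 0) ∧
    (∀ X, P.φ X = 0 ↔ ∃ a b : F, X = a • P.Z₁ + b • P.Z₂) :=
  statement_18_general P ha hcurv
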